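/- Let σ₁, σ₂, σ₃ > 0 and ρ₁₂, ρ₁₃, ρ₂₃ ∈ ℝ with ρ₁₂² < 1 and 1 − ρ₁₂² − ρ₁₃² − ρ₂₃² + 2ρ₁₂ρ₁₃ρ₂₃ ≥ 0. On a probability space let X₁, Z₂, Z₃ be independent Gaussian random variables with X₁ ~ N(0, σ₁²), Z₂ ~ N(0, σ₂²), Z₃ ~ N(0, σ₃²), and define X₂ := (ρ₁₂σ₂/σ₁) X₁ + √(1 − ρ₁₂²) Z₂ and X₃ := (ρ₁₃σ₃/σ₁) X₁ + (σ₃(ρ₂₃ − ρ₁₂ρ₁₃)/(σ₂√(1 − ρ₁₂²))) Z₂ + √((1 − ρ₁₂² − ρ₁₃² − ρ₂₃² + 2ρ₁₂ρ₁₃ρ₂₃)/(1 − ρ₁₂²)) Z₃. Then Var(X₁ + X₂ + X₃) = σ₁² + σ₂² + σ₃² + 2ρ₁₂σ₁σ₂ + 2ρ₁₃σ₁σ₃ + 2ρ₂₃σ₂σ₃, the conditional expectation satisfies E[X₁ + X₂ + X₃ | σ(X₁)] = (1 + ρ₁₂σ₂/σ₁ + ρ₁₃σ₃/σ₁) X₁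 almost surely, and hence Var(E[X₁ + X₂ + X₃ | σ(X₁)]) = (σ₁ + ρ₁₂σ₂ + ρ₁₃σ₃)². -/

import Mathlib

open MeasureTheory ProbabilityTheory

open Real
open scoped NNReal ENNReal


lemma integral_sq_exp (b : ℝ) (hb : 0 < b) :
    ∫ x : ℝ, x ^ 2 * rexp (-b * x ^ 2) = Real.sqrt (π / b) / (2 * b) := by
  have hint_sq : Integrable (fun x : ℝ => x ^ 2 * rexp (-b * x ^ 2)) := by
    have := integrable_rpow_mul_exp_neg_mul_sq hb (s := 2) (by norm_num)
    convert this using 2 with x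
    rw [← Real.rpow_natCast x 2]
    norm_num
  have hderiv : ∀ x : ℝ, HasDerivAt (fun x : ℝ => x * rexp (-b * x ^ 2))
      (rexp (-b * x ^ 2) - 2 * b * (x ^ 2 * rexp (-b * x ^ 2))) x := by
    intro x
    have h1 : HasDerivAt (fun x : ℝ => -b * x ^ 2) (-b * (2 * x)) x := by
      simpa using ((hasDerivAt_pow 2 x).const_mul (-b))
    have h2 := h1.exp
    have h3 := (hasDerivAt_id x).mul h2
    exact h3.congr_deriv (by simp only [id_eq]; ring)
  have hint' : Integrable (fun x : ℝ =>
      rexp (-b * x ^ 2) - 2 * b * (x ^ 2 * rexp (-b * x ^ 2))) :=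
    (integrable_exp_neg_mul_sq hb).sub (hint_sq.const_mul _)
  have h0 := integral_eq_zero_of_hasDerivAt_of_integrable hderiv hint'
    (integrable_mul_exp_neg_mul_sq hb)
  rw [integral_sub (integrable_exp_neg_mul_sq hb) (hint_sq.const_mul _),
    MeasureTheory.integral_const_mul, integral_gaussian, sub_eq_zero] at h0
  rw [eq_div_iff (by positivity)]
  linarith

lemma gaussianPDFReal_zero_eq (v : ℝ≥0) (x : ℝ) :
    gaussianPDFReal 0 v x = (Real.sqrt (2 * π * v))⁻¹ * rexp (-(2 * (v:ℝ))⁻¹ * x ^ 2) := by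
  rw [gaussianPDFReal]
  congr 1
  rw [sub_zero]
  congr 1
  field_simp

lemma integrable_sq_gaussianPDFReal {v : ℝ≥0} (hv : 0 < (v:ℝ)) :
    Integrable (fun x : ℝ => x ^ 2 * gaussianPDFReal 0 v x) := by
  have hb : 0 < (2 * (v:ℝ))⁻¹ := by positivity
  have h : (fun x : ℝ => x ^ 2 * gaussianPDFReal 0 v x)
      = fun x => (Real.sqrt (2 * π * v))⁻¹ * (x ^ 2 * rexp (-(2 * (v:ℝ))⁻¹ * x ^ 2)) := by
    ext x; rw [gaussianPDFReal_zero_eq]; ring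
  rw [h]
  refine Integrable.const_mul ?_ _
  have := integrable_rpow_mul_exp_neg_mul_sq hb (s := 2) (by norm_num)
  convert this using 2 with x
  rw [← Real.rpow_natCast x 2]; norm_num

lemma integrable_id_gaussianPDFReal {v : ℝ≥0} (hv : 0 < (v:ℝ)) :
    Integrable (fun x : ℝ => x * gaussianPDFReal 0 v x) := by
  have hb : 0 < (2 * (v:ℝ))⁻¹ := by positivity
  have h : (fun x : ℝ => x * gaussianPDFReal 0 v x)
      = fun x => (Real.sqrt (2 * π * v))⁻¹ * (x * rexp (-(2 * (v:ℝ))⁻¹ * x ^ 2)) := by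
    ext x; rw [gaussianPDFReal_zero_eq]; ring
  rw [h]
  exact (integrable_mul_exp_neg_mul_sq hb).const_mul _

lemma integral_id_gaussianPDFReal (v : ℝ≥0) :
    ∫ x : ℝ, x * gaussianPDFReal 0 v x = 0 := by
  have h : ∫ x : ℝ, (-x) * gaussianPDFReal 0 v (-x) = ∫ x : ℝ, x * gaussianPDFReal 0 v x :=
    integral_neg_eq_self (fun x : ℝ => x * gaussianPDFReal 0 v x) volume
  have h2 : ∀ x : ℝ, (-x) * gaussianPDFReal 0 v (-x) = -(x * gaussianPDFReal 0 v x) := by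
    intro x
    rw [gaussianPDFReal_zero_eq, gaussianPDFReal_zero_eq]
    ring_nf
  simp_rw [h2, integral_neg] at h
  linarith

lemma integral_sq_gaussianPDFReal {v : ℝ≥0} (hv : 0 < (v:ℝ)) :
    ∫ x : ℝ, x ^ 2 * gaussianPDFReal 0 v x = v := by
  have hb : 0 < (2 * (v:ℝ))⁻¹ := by positivity
  have h : (fun x : ℝ => x ^ 2 * gaussianPDFReal 0 v x)
      = fun x => (Real.sqrt (2 * π * v))⁻¹ * (x ^ 2 * rexp (-(2 * (v:ℝ))⁻¹ * x ^ 2)) := by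
    ext x; rw [gaussianPDFReal_zero_eq]; ring
  rw [h, MeasureTheory.integral_const_mul, integral_sq_exp _ hb]
  have h1 : π / (2 * (v:ℝ))⁻¹ = 2 * π * v := by field_simp
  have h2 : 2 * (2 * (v:ℝ))⁻¹ = (v:ℝ)⁻¹ := by field_simp
  rw [h1, h2]
  have h3 : Real.sqrt (2 * π * v) ≠ 0 := by positivity
  field_simp

lemma gaussianReal_eq_withDensity' {v : ℝ≥0} (hv : v ≠ 0) :
    gaussianReal 0 v = volume.withDensity
      (fun x => ((gaussianPDFReal 0 v x).toNNReal : ℝ≥0∞)) := by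
  rw [gaussianReal_of_var_ne_zero _ hv]
  rfl

lemma integral_fun_gaussianReal {v : ℝ≥0} (hv : v ≠ 0) (g : ℝ → ℝ) :
    ∫ x, g x ∂(gaussianReal 0 v) = ∫ x, g x * gaussianPDFReal 0 v x := by
  rw [gaussianReal_eq_withDensity' hv,
    integral_withDensity_eq_integral_smul
      ((measurable_gaussianPDFReal 0 v).real_toNNReal) g]
  congr 1
  ext x
  rw [NNReal.smul_def, smul_eq_mul, Real.coe_toNNReal _ (gaussianPDFReal_nonneg 0 v x), mul_comm]

lemma integrable_fun_gaussianReal {v : ℝ≥0} (hv : v ≠ 0) (g : ℝ → ℝ) (hg : Measurable g)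
    (hint : Integrable (fun x => g x * gaussianPDFReal 0 v x)) :
    Integrable g (gaussianReal 0 v) := by
  rw [gaussianReal_of_var_ne_zero _ hv,
    integrable_withDensity_iff (measurable_gaussianPDF 0 v)
      (ae_of_all _ fun x => ENNReal.ofReal_lt_top)]
  convert hint using 2 with x
  · rfl
  rw [gaussianPDF, ENNReal.toReal_ofReal (gaussianPDFReal_nonneg 0 v x)]

lemma memℒp_two_id_gaussianReal {v : ℝ≥0} (hv : 0 < (v:ℝ)) :
    MemLp (id : ℝ → ℝ) 2 (gaussianReal 0 v) := by
  have hv' : v ≠ 0 := by simpa using hv.ne'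
  rw [memLp_two_iff_integrable_sq measurable_id.aestronglyMeasurable]
  exact integrable_fun_gaussianReal hv' _ (by measurability) (integrable_sq_gaussianPDFReal hv)

lemma integral_id_gaussianReal' {v : ℝ≥0} (hv : 0 < (v:ℝ)) :
    ∫ x, x ∂(gaussianReal 0 v) = 0 := by
  have hv' : v ≠ 0 := by simpa using hv.ne'
  rw [integral_fun_gaussianReal hv' (fun x => x), integral_id_gaussianPDFReal]

lemma integral_sq_gaussianReal' {v : ℝ≥0} (hv : 0 < (v:ℝ)) :
    ∫ x, x ^ 2 ∂(gaussianReal 0 v) = v := by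
  have hv' : v ≠ 0 := by simpa using hv.ne'
  rw [integral_fun_gaussianReal hv' (fun x => x ^ 2), integral_sq_gaussianPDFReal hv]


section helpers
variable {Ω : Type*} [MeasurableSpace Ω] {P : Measure Ω}

lemma variance_congr' {f g : Ω → ℝ} (h : f =ᵐ[P] g) : variance f P = variance g P := by
  have hint : ∫ ω, f ω ∂P = ∫ ω, g ω ∂P := integral_congr_ae h
  unfold ProbabilityTheory.variance ProbabilityTheory.evariance
  congr 1
  apply lintegral_congr_ae
  filter_upwards [h] with ω hw
  rw [hw, hint]

lemma gaussian_rv_memℒp [IsProbabilityMeasure P] {X : Ω → ℝ} (hX : Measurable X) {v : ℝ≥0}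
    (hv : 0 < (v:ℝ)) (hlaw : P.map X = gaussianReal 0 v) : MemLp X 2 P := by
  have h := memℒp_two_id_gaussianReal hv
  rw [← hlaw] at h
  exact (memLp_map_measure_iff measurable_id.aestronglyMeasurable hX.aemeasurable).mp h

lemma gaussian_rv_integral_zero [IsProbabilityMeasure P] {X : Ω → ℝ} (hX : Measurable X)
    {v : ℝ≥0} (hv : 0 < (v:ℝ)) (hlaw : P.map X = gaussianReal 0 v) :
    ∫ ω, X ω ∂P = 0 := by
  have h := integral_id_gaussianReal' hv
  rw [← hlaw] at h
  rwa [integral_map hX.aemeasurable (f := fun x => x) measurable_id.aestronglyMeasurable] at h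

lemma gaussian_rv_variance [IsProbabilityMeasure P] {X : Ω → ℝ} (hX : Measurable X)
    {v : ℝ≥0} (hv : 0 < (v:ℝ)) (hlaw : P.map X = gaussianReal 0 v) :
    variance X P = v := by
  have hmem := gaussian_rv_memℒp hX hv hlaw
  rw [variance_of_integral_eq_zero hX.aemeasurable (gaussian_rv_integral_zero hX hv hlaw)]
  have h := integral_sq_gaussianReal' hv
  rw [← hlaw] at h
  rw [integral_map hX.aemeasurable (f := fun x => x ^ 2)
    (by fun_prop : AEStronglyMeasurable (fun x : ℝ => x ^ 2) _)] at h
  exact h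

end helpers

/-- Section 5.1, linear model with the Gaussian dependency model:
with `X₂ := (ρ₁₂σ₂/σ₁)X₁ + √(1−ρ₁₂²) Z₂` and
`X₃ := (ρ₁₃σ₃/σ₁)X₁ + (σ₃(ρ₂₃−ρ₁₂ρ₁₃)/(σ₂√(1−ρ₁₂²))) Z₂ + √((1−ρ₁₂²−ρ₁₃²−ρ₂₃²+2ρ₁₂ρ₁₃ρ₂₃)/(1−ρ₁₂²)) Z₃`
built from independent centered Gaussians `X₁, Z₂, Z₃` of variances `σ₁², σ₂², σ₃²`:
`Var(X₁+X₂+X₃) = σ₁²+σ₂²+σ₃²+2ρ₁₂σ₁σ₂+2ρ₁₃σ₁σ₃+2ρ₂₃σ₂σ₃`,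
`E[X₁+X₂+X₃ | σ(X₁)] = (1+ρ₁₂σ₂/σ₁+ρ₁₃σ₃/σ₁)X₁` a.s., and
`Var(E[X₁+X₂+X₃ | σ(X₁)]) = (σ₁+ρ₁₂σ₂+ρ₁₃σ₃)²`. -/
theorem linear_model_gaussian_dependency
    {Ω : Type*} [MeasurableSpace Ω] (P : Measure Ω) [IsProbabilityMeasure P]
    (σ1 σ2 σ3 ρ12 ρ13 ρ23 : ℝ)
    (hσ1 : 0 < σ1) (hσ2 : 0 < σ2) (hσ3 : 0 < σ3)
    (hρ12 : ρ12 ^ 2 < 1)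
    (hdet : 0 ≤ 1 - ρ12 ^ 2 - ρ13 ^ 2 - ρ23 ^ 2 + 2 * ρ12 * ρ13 * ρ23)
    (X1 Z2 Z3 : Ω → ℝ)
    (hX1 : Measurable X1) (hZ2 : Measurable Z2) (hZ3 : Measurable Z3)
    -- X₁, Z₂, Z₃ are mutually independent:
    (hindep1 : IndepFun X1 (fun ω => (Z2 ω, Z3 ω)) P) (hindep2 : IndepFun Z2 Z3 P)
    -- centered Gaussian laws:
    (hlaw1 : P.map X1 = gaussianReal 0 (Real.toNNReal (σ1 ^ 2)))
    (hlaw2 : P.map Z2 = gaussianReal 0 (Real.toNNReal (σ2 ^ 2)))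
    (hlaw3 : P.map Z3 = gaussianReal 0 (Real.toNNReal (σ3 ^ 2)))
    -- the dependency model:
    (X2 X3 : Ω → ℝ)
    (hX2 : X2 = fun ω => (ρ12 * σ2 / σ1) * X1 ω + Real.sqrt (1 - ρ12 ^ 2) * Z2 ω)
    (hX3 : X3 = fun ω => (ρ13 * σ3 / σ1) * X1 ω
      + (σ3 * (ρ23 - ρ12 * ρ13) / (σ2 * Real.sqrt (1 - ρ12 ^ 2))) * Z2 ω
      + Real.sqrt ((1 - ρ12 ^ 2 - ρ13 ^ 2 - ρ23 ^ 2 + 2 * ρ12 * ρ13 * ρ23)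
          / (1 - ρ12 ^ 2)) * Z3 ω) :
    variance (fun ω => X1 ω + X2 ω + X3 ω) P
        = σ1 ^ 2 + σ2 ^ 2 + σ3 ^ 2
          + 2 * ρ12 * σ1 * σ2 + 2 * ρ13 * σ1 * σ3 + 2 * ρ23 * σ2 * σ3 ∧
    (P[fun ω => X1 ω + X2 ω + X3 ω | MeasurableSpace.comap X1 inferInstance]
        =ᵐ[P] fun ω => (1 + ρ12 * σ2 / σ1 + ρ13 * σ3 / σ1) * X1 ω) ∧
    variance (P[fun ω => X1 ω + X2 ω + X3 ω | MeasurableSpace.comap X1 inferInstance]) P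
        = (σ1 + ρ12 * σ2 + ρ13 * σ3) ^ 2 := by
  -- setup
  have h12 : (0:ℝ) < 1 - ρ12 ^ 2 := by linarith
  set s : ℝ := Real.sqrt (1 - ρ12 ^ 2) with hs_def
  have hs2 : s ^ 2 = 1 - ρ12 ^ 2 := Real.sq_sqrt h12.le
  have hs0 : 0 < s := Real.sqrt_pos.mpr h12
  set q : ℝ := ρ23 - ρ12 * ρ13 with hq_def
  set a : ℝ := 1 + ρ12 * σ2 / σ1 + ρ13 * σ3 / σ1 with ha_def
  set b : ℝ := s + σ3 * q / (σ2 * s) with hb_def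
  set c : ℝ := Real.sqrt ((1 - ρ12 ^ 2 - ρ13 ^ 2 - ρ23 ^ 2 + 2 * ρ12 * ρ13 * ρ23)
      / (1 - ρ12 ^ 2)) with hc_def
  have hc2 : c ^ 2 = (1 - ρ12 ^ 2 - ρ13 ^ 2 - ρ23 ^ 2 + 2 * ρ12 * ρ13 * ρ23) / (1 - ρ12 ^ 2) :=
    Real.sq_sqrt (div_nonneg hdet h12.le)
  set W : Ω → ℝ := fun ω => b * Z2 ω + c * Z3 ω with hW_def
  have hS : (fun ω => X1 ω + X2 ω + X3 ω) = (fun ω => a * X1 ω) + W := by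
    subst hX2 hX3
    funext ω
    simp only [hW_def, ha_def, hb_def, Pi.add_apply]
    ring
  -- gaussian variances of the inputs
  have hv1 : (0:ℝ) < ((Real.toNNReal (σ1 ^ 2)):ℝ) := by
    rw [Real.coe_toNNReal _ (sq_nonneg σ1)]; positivity
  have hv2 : (0:ℝ) < ((Real.toNNReal (σ2 ^ 2)):ℝ) := by
    rw [Real.coe_toNNReal _ (sq_nonneg σ2)]; positivity
  have hv3 : (0:ℝ) < ((Real.toNNReal (σ3 ^ 2)):ℝ) := by
    rw [Real.coe_toNNReal _ (sq_nonneg σ3)]; positivity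
  have hm1 : MemLp X1 2 P := gaussian_rv_memℒp hX1 hv1 hlaw1
  have hm2 : MemLp Z2 2 P := gaussian_rv_memℒp hZ2 hv2 hlaw2
  have hm3 : MemLp Z3 2 P := gaussian_rv_memℒp hZ3 hv3 hlaw3
  have hvar1 : variance X1 P = σ1 ^ 2 := by
    rw [gaussian_rv_variance hX1 hv1 hlaw1, Real.coe_toNNReal _ (sq_nonneg σ1)]
  have hvar2 : variance Z2 P = σ2 ^ 2 := by
    rw [gaussian_rv_variance hZ2 hv2 hlaw2, Real.coe_toNNReal _ (sq_nonneg σ2)]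
  have hvar3 : variance Z3 P = σ3 ^ 2 := by
    rw [gaussian_rv_variance hZ3 hv3 hlaw3, Real.coe_toNNReal _ (sq_nonneg σ3)]
  have hmW : MemLp W 2 P := (hm2.const_mul b).add (hm3.const_mul c)
  have mW : Measurable W := (hZ2.const_mul b).add (hZ3.const_mul c)
  -- independence
  have hiXW : IndepFun X1 W P := by
    have h := hindep1.comp measurable_id
      ((measurable_fst.const_mul b).add (measurable_snd.const_mul c))
    exact h
  have hZ23 : IndepFun (fun ω => b * Z2 ω) (fun ω => c * Z3 ω) P :=
    hindep2.comp (measurable_id.const_mul b) (measurable_id.const_mul c)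
  have haXW : IndepFun (fun ω => a * X1 ω) W P :=
    hiXW.comp (measurable_id.const_mul a) measurable_id
  -- variance of the sum
  have hvarW : variance W P = b ^ 2 * σ2 ^ 2 + c ^ 2 * σ3 ^ 2 := by
    rw [hW_def, show (fun ω => b * Z2 ω + c * Z3 ω)
        = (fun ω => b * Z2 ω) + (fun ω => c * Z3 ω) from rfl,
      hZ23.variance_add (hm2.const_mul b) (hm3.const_mul c),
      variance_const_mul, variance_const_mul, hvar2, hvar3]
  have hvarS : variance (fun ω => X1 ω + X2 ω + X3 ω) P
      = a ^ 2 * σ1 ^ 2 + (b ^ 2 * σ2 ^ 2 + c ^ 2 * σ3 ^ 2) := by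
    rw [hS, haXW.variance_add (hm1.const_mul a) hmW, variance_const_mul, hvar1, hvarW]
  -- conditional expectation
  have hm_le : MeasurableSpace.comap X1 inferInstance ≤ (inferInstance : MeasurableSpace Ω) := by
    exact measurable_iff_comap_le.mp hX1
  have hintaX1 : Integrable (fun ω => a * X1 ω) P := (hm1.const_mul a).integrable one_le_two
  have hintW : Integrable W P := hmW.integrable one_le_two
  have hEW : ∫ ω, W ω ∂P = 0 := by
    rw [hW_def]
    rw [integral_add ((hm2.const_mul b).integrable one_le_two)
      ((hm3.const_mul c).integrable one_le_two),
      MeasureTheory.integral_const_mul, MeasureTheory.integral_const_mul,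
      gaussian_rv_integral_zero hZ2 hv2 hlaw2, gaussian_rv_integral_zero hZ3 hv3 hlaw3]
    ring
  have hcond1 : P[(fun ω => a * X1 ω)|MeasurableSpace.comap X1 inferInstance]
      = fun ω => a * X1 ω :=
    condExp_of_stronglyMeasurable (μ := P) hm_le
      (((measurable_iff_comap_le.mpr le_rfl).const_mul a).stronglyMeasurable) hintaX1
  have hcond2 : P[W|MeasurableSpace.comap X1 inferInstance] =ᵐ[P] fun _ => (0:ℝ) := by
    have h := condExp_indep_eq (measurable_iff_comap_le.mp mW) hm_le
      ((measurable_iff_comap_le.mpr le_rfl).stronglyMeasurable :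
        StronglyMeasurable[MeasurableSpace.comap W inferInstance] W)
      (((IndepFun_iff_Indep _ _ _).mp hiXW.symm))
    rw [hEW] at h
    exact h
  have hcond : P[fun ω => X1 ω + X2 ω + X3 ω|MeasurableSpace.comap X1 inferInstance]
      =ᵐ[P] fun ω => a * X1 ω := by
    rw [hS]
    have hadd := condExp_add (m := MeasurableSpace.comap X1 inferInstance) hintaX1 hintW
    filter_upwards [hadd, hcond2] with ω h1 h2
    rw [h1, Pi.add_apply, hcond1, h2, add_zero]
  -- algebra
  have hσ1' : σ1 ≠ 0 := hσ1.ne'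
  have hσ2' : σ2 ≠ 0 := hσ2.ne'
  have haσ1 : a * σ1 = σ1 + ρ12 * σ2 + ρ13 * σ3 := by
    rw [ha_def]; field_simp
  have ha2 : a ^ 2 * σ1 ^ 2 = (σ1 + ρ12 * σ2 + ρ13 * σ3) ^ 2 := by
    rw [← haσ1]; ring
  have hvarcond : variance (P[fun ω => X1 ω + X2 ω + X3 ω|MeasurableSpace.comap X1 inferInstance]) P
      = (σ1 + ρ12 * σ2 + ρ13 * σ3) ^ 2 := by
    rw [variance_congr' hcond, variance_const_mul, hvar1, ha2]
  refine ⟨?_, hcond, hvarcond⟩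
  rw [hvarS, ha2]
  have hb2 : b ^ 2 * σ2 ^ 2 = σ2 ^ 2 * (1 - ρ12 ^ 2) + 2 * σ2 * σ3 * q
      + σ3 ^ 2 * q ^ 2 / (1 - ρ12 ^ 2) := by
    rw [hb_def]
    rw [show (s + σ3 * q / (σ2 * s)) ^ 2 * σ2 ^ 2
        = σ2 ^ 2 * s ^ 2 + 2 * σ2 * σ3 * q * (s * s⁻¹) + σ3 ^ 2 * q ^ 2 / s ^ 2 by
      field_simp; ring]
    rw [mul_inv_cancel₀ hs0.ne', hs2]
    ring
  rw [hb2, hc2, hq_def]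
  field_simp
  ring
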